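/- Let X ≥ 0, Z_1 ≥ Y_1 ≥ 0 and Z_2 ≥ Y_2 ≥ 0 be random variables such that Y_1 is independent of (Y_2, Z_2), Y_2 is independent of (Y_1, Z_1), and for i ∈ {1,2}, Z_i < X implies Z_i = 0. Then (with the convention 0/0 = 0), Cov(Y_1/(X+Z_1), Y_2/(X+Z_2)) ≤ E[Y_1/Z_1]·E[Y_2 X/Z_2^2] + E[Y_2/Z_2]·E[Y_1 X/Z_1^2] + (1/(E[Z_1]E[Z_2]))·sqrt(E[(Y_1(Z_1−E[Z_1])/Z_1)^2]·E[(Y_2(Z_2−E[Z_2])/Z_2)^2]). -/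

import Mathlib

/-!
Pointwise `Y / (X + Z) ≤ Y / Z` bounds `E[A₁A₂]` by `E[R₁R₂]`, where `Aᵢ = Yᵢ / (X + Zᵢ)` and
`Rᵢ = Yᵢ / Zᵢ`, while `Y / (X + Z) ≥ Y / Z - Y X / Z²` bounds `E[A₁] E[A₂]` from below. What
remains is `Cov(R₁, R₂)`: with `mᵢ = E[Zᵢ]` and `Wᵢ = Yᵢ (Zᵢ - mᵢ) / Zᵢ` one has
`mᵢ Rᵢ = Yᵢ - Wᵢ`, and the independence assumptions kill every term of `Cov(Y₁ - W₁, Y₂ - W₂)`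
except `Cov(W₁, W₂)`, which Cauchy–Schwarz bounds by `√(E[W₁²] E[W₂²])`.
-/

open MeasureTheory ProbabilityTheory

section Covariance

variable {Ω : Type*} [MeasurableSpace Ω] {μ : Measure Ω} {f g : Ω → ℝ}

lemma integral_mul_le_sqrt_integral_sq_mul (hf : MemLp f 2 μ) (hg : MemLp g 2 μ) :
    ∫ ω, f ω * g ω ∂μ ≤ √((∫ ω, f ω ^ 2 ∂μ) * ∫ ω, g ω ^ 2 ∂μ) := by
  calc ∫ ω, f ω * g ω ∂μ ≤ ∫ ω, ‖f ω‖ * ‖g ω‖ ∂μ :=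
        integral_mono (hf.integrable_mul hg) (hf.norm.integrable_mul hg.norm)
          fun ω => (norm_mul (f ω) (g ω)) ▸ Real.le_norm_self _
    _ ≤ (∫ ω, ‖f ω‖ ^ (2 : ℝ) ∂μ) ^ (1 / 2 : ℝ) * (∫ ω, ‖g ω‖ ^ (2 : ℝ) ∂μ) ^ (1 / 2 : ℝ) :=
        integral_mul_norm_le_Lp_mul_Lq Real.HolderConjugate.two_two
          (by simpa using hf) (by simpa using hg)
    _ = √((∫ ω, f ω ^ 2 ∂μ) * ∫ ω, g ω ^ 2 ∂μ) := by
        simp only [Real.rpow_two, Real.norm_eq_abs, sq_abs, ← Real.sqrt_eq_rpow]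
        rw [Real.sqrt_mul (integral_nonneg fun ω => sq_nonneg _)]

lemma covariance_le_sqrt_integral_sq_mul [IsProbabilityMeasure μ] (hf : MemLp f 2 μ)
    (hg : MemLp g 2 μ) : cov[f, g; μ] ≤ √((∫ ω, f ω ^ 2 ∂μ) * ∫ ω, g ω ^ 2 ∂μ) := by
  calc cov[f, g; μ] ≤ √((∫ ω, (f ω - μ[f]) ^ 2 ∂μ) * ∫ ω, (g ω - μ[g]) ^ 2 ∂μ) :=
        integral_mul_le_sqrt_integral_sq_mul (hf.sub (memLp_const _)) (hg.sub (memLp_const _))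
    _ = √(Var[f; μ] * Var[g; μ]) := by
        rw [variance_eq_integral hf.aemeasurable, variance_eq_integral hg.aemeasurable]
    _ ≤ √((∫ ω, f ω ^ 2 ∂μ) * ∫ ω, g ω ^ 2 ∂μ) :=
        Real.sqrt_le_sqrt <| mul_le_mul (variance_le_expectation_sq hf.1)
          (variance_le_expectation_sq hg.1) (variance_nonneg _ _)
          (integral_nonneg fun ω => sq_nonneg _)

lemma covariance_eq_zero_of_ae_eq_zero_left (hf : f =ᵐ[μ] 0) : cov[f, g; μ] = 0 := by
  refine integral_eq_zero_of_ae ?_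
  filter_upwards [hf] with ω hω
  simp [hω, integral_eq_zero_of_ae hf]

end Covariance

lemma div_add_le_div {x y z : ℝ} (hx : 0 ≤ x) (hy : 0 ≤ y) (hyz : y ≤ z) :
    y / (x + z) ≤ y / z := by
  rcases (hy.trans hyz).eq_or_lt with hz | hz
  · simp [le_antisymm (hz ▸ hyz) hy]
  · exact div_le_div_of_nonneg_left hy hz (le_add_of_nonneg_left hx)

lemma div_sub_mul_div_sq_le_div_add {x y z : ℝ} (hx : 0 ≤ x) (hy : 0 ≤ y) (hyz : y ≤ z) :
    y / z - y * x / z ^ 2 ≤ y / (x + z) := by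
  rcases (hy.trans hyz).eq_or_lt with hz | hz
  · simp [← hz, le_antisymm (hz ▸ hyz) hy]
  · have hxz : 0 < x + z := by linarith
    have key : y / z - y / (x + z) = y * x / (z * (x + z)) := by
      field_simp
      ring
    have : y * x / (z * (x + z)) ≤ y * x / z ^ 2 :=
      div_le_div_of_nonneg_left (mul_nonneg hy hx) (by positivity) (by nlinarith)
    linarith

lemma div_sub_mul_div_sq_nonneg {x y z : ℝ} (hy : 0 ≤ y) (hzx : z < x → z = 0) :
    0 ≤ y / z - y * x / z ^ 2 := by
  rcases eq_or_ne z 0 with hz | hz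
  · simp [hz]
  · have hxz : x ≤ z := not_lt.1 fun h => hz (hzx h)
    have key : y / z - y * x / z ^ 2 = y * (z - x) / z ^ 2 := by
      field_simp
    rw [key]
    exact div_nonneg (mul_nonneg hy (sub_nonneg.2 hxz)) (sq_nonneg z)

lemma sub_mul_sub_div_eq_mul_div {y z : ℝ} (c : ℝ) (hzy : z = 0 → y = 0) :
    y - y * (z - c) / z = c * (y / z) := by
  rcases eq_or_ne z 0 with hz | hz
  · simp [hz, hzy hz]
  · field_simp
    ring

section Ratio

variable {Ω : Type*} [MeasurableSpace Ω] {μ : Measure Ω} {X Y Z Y₁ Y₂ Z₁ Z₂ : Ω → ℝ}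

lemma integral_div_sub_integral_le_integral_div_add (hX : ∀ ω, 0 ≤ X ω) (hY : ∀ ω, 0 ≤ Y ω)
    (hYZ : ∀ ω, Y ω ≤ Z ω) (hA : Integrable (fun ω => Y ω / (X ω + Z ω)) μ)
    (hR : Integrable (fun ω => Y ω / Z ω) μ) (ha : Integrable (fun ω => Y ω * X ω / Z ω ^ 2) μ) :
    (∫ ω, Y ω / Z ω ∂μ) - ∫ ω, Y ω * X ω / Z ω ^ 2 ∂μ ≤ ∫ ω, Y ω / (X ω + Z ω) ∂μ := by
  rw [← integral_sub hR ha]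
  exact integral_mono (hR.sub ha) hA fun ω => div_sub_mul_div_sq_le_div_add (hX ω) (hY ω) (hYZ ω)

lemma integral_mul_div_sq_le_integral_div (hY : ∀ ω, 0 ≤ Y ω) (hZX : ∀ ω, Z ω < X ω → Z ω = 0)
    (hR : Integrable (fun ω => Y ω / Z ω) μ) (ha : Integrable (fun ω => Y ω * X ω / Z ω ^ 2) μ) :
    ∫ ω, Y ω * X ω / Z ω ^ 2 ∂μ ≤ ∫ ω, Y ω / Z ω ∂μ :=
  integral_mono ha hR fun ω => sub_nonneg.1 (div_sub_mul_div_sq_nonneg (hY ω) (hZX ω))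

lemma memLp_div_of_nonneg_of_le [IsFiniteMeasure μ] (p : ENNReal) (hYm : AEMeasurable Y μ)
    (hZm : AEMeasurable Z μ) (hY : ∀ ω, 0 ≤ Y ω) (hYZ : ∀ ω, Y ω ≤ Z ω) :
    MemLp (fun ω => Y ω / Z ω) p μ :=
  MemLp.of_bound (hYm.div hZm).aestronglyMeasurable 1 <| ae_of_all _ fun ω => by
    rw [Real.norm_of_nonneg (div_nonneg (hY ω) ((hY ω).trans (hYZ ω)))]
    exact div_le_one_of_le₀ (hYZ ω) ((hY ω).trans (hYZ ω))

lemma div_ae_eq_zero_of_integral_eq_zero (hY : ∀ ω, 0 ≤ Y ω) (hYZ : ∀ ω, Y ω ≤ Z ω)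
    (hZ : Integrable Z μ) (h : ∫ ω, Z ω ∂μ = 0) : (fun ω => Y ω / Z ω) =ᵐ[μ] 0 := by
  filter_upwards [(integral_eq_zero_iff_of_nonneg (fun ω => (hY ω).trans (hYZ ω)) hZ).1 h]
    with ω hω
  simp [show Z ω = 0 from hω]

lemma mul_mul_covariance_div_le [IsProbabilityMeasure μ] (c₁ c₂ : ℝ)
    (hY₁m : AEMeasurable Y₁ μ) (hZ₁m : AEMeasurable Z₁ μ)
    (hY₂m : AEMeasurable Y₂ μ) (hZ₂m : AEMeasurable Z₂ μ)
    (hY₁ : ∀ ω, 0 ≤ Y₁ ω) (hY₁Z₁ : ∀ ω, Y₁ ω ≤ Z₁ ω)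
    (hY₂ : ∀ ω, 0 ≤ Y₂ ω) (hY₂Z₂ : ∀ ω, Y₂ ω ≤ Z₂ ω)
    (hind₁ : IndepFun Y₁ (fun ω => (Y₂ ω, Z₂ ω)) μ)
    (hind₂ : IndepFun Y₂ (fun ω => (Y₁ ω, Z₁ ω)) μ)
    (hW₁ : Integrable (fun ω => (Y₁ ω * (Z₁ ω - c₁) / Z₁ ω) ^ 2) μ)
    (hW₂ : Integrable (fun ω => (Y₂ ω * (Z₂ ω - c₂) / Z₂ ω) ^ 2) μ) :
    c₁ * c₂ * cov[fun ω => Y₁ ω / Z₁ ω, fun ω => Y₂ ω / Z₂ ω; μ]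
      ≤ √((∫ ω, (Y₁ ω * (Z₁ ω - c₁) / Z₁ ω) ^ 2 ∂μ)
          * ∫ ω, (Y₂ ω * (Z₂ ω - c₂) / Z₂ ω) ^ 2 ∂μ) := by
  set W₁ := fun ω => Y₁ ω * (Z₁ ω - c₁) / Z₁ ω
  set W₂ := fun ω => Y₂ ω * (Z₂ ω - c₂) / Z₂ ω
  have hsub₁ (ω : Ω) : Y₁ ω - W₁ ω = c₁ * (Y₁ ω / Z₁ ω) :=
    sub_mul_sub_div_eq_mul_div c₁ fun hz => le_antisymm (hz ▸ hY₁Z₁ ω) (hY₁ ω)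
  have hsub₂ (ω : Ω) : Y₂ ω - W₂ ω = c₂ * (Y₂ ω / Z₂ ω) :=
    sub_mul_sub_div_eq_mul_div c₂ fun hz => le_antisymm (hz ▸ hY₂Z₂ ω) (hY₂ ω)
  have hW₁L2 : MemLp W₁ 2 μ :=
    (memLp_two_iff_integrable_sq (by fun_prop)).2 hW₁
  have hW₂L2 : MemLp W₂ 2 μ :=
    (memLp_two_iff_integrable_sq (by fun_prop)).2 hW₂
  have hY₁L2 : MemLp Y₁ 2 μ := by
    convert ((memLp_div_of_nonneg_of_le 2 hY₁m hZ₁m hY₁ hY₁Z₁).const_mul c₁).add hW₁L2 using 1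
    funext ω
    simp only [Pi.add_apply, ← hsub₁, sub_add_cancel]
  have hY₂L2 : MemLp Y₂ 2 μ := by
    convert ((memLp_div_of_nonneg_of_le 2 hY₂m hZ₂m hY₂ hY₂Z₂).const_mul c₂).add hW₂L2 using 1
    funext ω
    simp only [Pi.add_apply, ← hsub₂, sub_add_cancel]
  have hφ (c : ℝ) : Measurable fun p : ℝ × ℝ => p.1 * (p.2 - c) / p.2 := by fun_prop
  have hY₁Y₂ : IndepFun Y₁ Y₂ μ := hind₁.comp measurable_id measurable_fst
  have hY₁W₂ : IndepFun Y₁ W₂ μ := hind₁.comp measurable_id (hφ c₂)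
  have hW₁Y₂ : IndepFun W₁ Y₂ μ := (hind₂.comp measurable_id (hφ c₁)).symm
  calc c₁ * c₂ * cov[fun ω => Y₁ ω / Z₁ ω, fun ω => Y₂ ω / Z₂ ω; μ]
      = cov[fun ω => c₁ * (Y₁ ω / Z₁ ω), fun ω => c₂ * (Y₂ ω / Z₂ ω); μ] := by
        rw [covariance_const_mul_left, covariance_const_mul_right]
        ring
    _ = cov[fun ω => Y₁ ω - W₁ ω, fun ω => Y₂ ω - W₂ ω; μ] := by
        simp only [hsub₁, hsub₂]
    _ = cov[W₁, W₂; μ] := by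
        rw [covariance_fun_sub_fun_sub hY₁L2 hW₁L2 hY₂L2 hW₂L2,
          hY₁Y₂.covariance_eq_zero hY₁L2 hY₂L2, hY₁W₂.covariance_eq_zero hY₁L2 hW₂L2,
          hW₁Y₂.covariance_eq_zero hW₁L2 hY₂L2]
        ring
    _ ≤ _ := covariance_le_sqrt_integral_sq_mul hW₁L2 hW₂L2

lemma covariance_div_le [IsProbabilityMeasure μ]
    (hY₁m : AEMeasurable Y₁ μ) (hY₂m : AEMeasurable Y₂ μ)
    (hZ₁ : Integrable Z₁ μ) (hZ₂ : Integrable Z₂ μ)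
    (hY₁ : ∀ ω, 0 ≤ Y₁ ω) (hY₁Z₁ : ∀ ω, Y₁ ω ≤ Z₁ ω)
    (hY₂ : ∀ ω, 0 ≤ Y₂ ω) (hY₂Z₂ : ∀ ω, Y₂ ω ≤ Z₂ ω)
    (hind₁ : IndepFun Y₁ (fun ω => (Y₂ ω, Z₂ ω)) μ)
    (hind₂ : IndepFun Y₂ (fun ω => (Y₁ ω, Z₁ ω)) μ)
    (hW₁ : Integrable (fun ω => (Y₁ ω * (Z₁ ω - ∫ x, Z₁ x ∂μ) / Z₁ ω) ^ 2) μ)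
    (hW₂ : Integrable (fun ω => (Y₂ ω * (Z₂ ω - ∫ x, Z₂ x ∂μ) / Z₂ ω) ^ 2) μ) :
    cov[fun ω => Y₁ ω / Z₁ ω, fun ω => Y₂ ω / Z₂ ω; μ]
      ≤ 1 / ((∫ ω, Z₁ ω ∂μ) * ∫ ω, Z₂ ω ∂μ)
          * √((∫ ω, (Y₁ ω * (Z₁ ω - ∫ x, Z₁ x ∂μ) / Z₁ ω) ^ 2 ∂μ)
            * ∫ ω, (Y₂ ω * (Z₂ ω - ∫ x, Z₂ x ∂μ) / Z₂ ω) ^ 2 ∂μ) := by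
  rcases (integral_nonneg fun ω => (hY₁ ω).trans (hY₁Z₁ ω) : 0 ≤ ∫ ω, Z₁ ω ∂μ).eq_or_lt
    with h₁ | h₁
  · rw [covariance_eq_zero_of_ae_eq_zero_left
      (div_ae_eq_zero_of_integral_eq_zero hY₁ hY₁Z₁ hZ₁ h₁.symm), ← h₁]
    simp
  rcases (integral_nonneg fun ω => (hY₂ ω).trans (hY₂Z₂ ω) : 0 ≤ ∫ ω, Z₂ ω ∂μ).eq_or_lt
    with h₂ | h₂
  · rw [covariance_comm, covariance_eq_zero_of_ae_eq_zero_left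
      (div_ae_eq_zero_of_integral_eq_zero hY₂ hY₂Z₂ hZ₂ h₂.symm), ← h₂]
    simp
  rw [one_div_mul_eq_div, le_div_iff₀ (mul_pos h₁ h₂), mul_comm]
  exact mul_mul_covariance_div_le _ _ hY₁m hZ₁.aemeasurable hY₂m hZ₂.aemeasurable
    hY₁ hY₁Z₁ hY₂ hY₂Z₂ hind₁ hind₂ hW₁ hW₂

end Ratio

theorem covariance_ratio_inequality_general
    {Ω : Type*} [MeasurableSpace Ω] (μ : Measure Ω) [IsProbabilityMeasure μ]
    (X Y1 Y2 Z1 Z2 : Ω → ℝ)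
    (hY1m : Measurable Y1) (hY2m : Measurable Y2)
    (hX : ∀ ω, 0 ≤ X ω)
    (hY1 : ∀ ω, 0 ≤ Y1 ω) (hY1Z1 : ∀ ω, Y1 ω ≤ Z1 ω)
    (hY2 : ∀ ω, 0 ≤ Y2 ω) (hY2Z2 : ∀ ω, Y2 ω ≤ Z2 ω)
    (hZ2X : ∀ ω, Z2 ω < X ω → Z2 ω = 0)
    (hind1 : IndepFun Y1 (fun ω => (Y2 ω, Z2 ω)) μ)
    (hind2 : IndepFun Y2 (fun ω => (Y1 ω, Z1 ω)) μ)
    -- all expectations appearing are assumed finite: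
    (hi1 : Integrable (fun ω => Y1 ω / (X ω + Z1 ω)) μ)
    (hi2 : Integrable (fun ω => Y2 ω / (X ω + Z2 ω)) μ)
    (hi3 : Integrable (fun ω => (Y1 ω / (X ω + Z1 ω)) * (Y2 ω / (X ω + Z2 ω))) μ)
    (hi4 : Integrable (fun ω => Y1 ω / Z1 ω) μ)
    (hi5 : Integrable (fun ω => Y2 ω / Z2 ω) μ)
    (hi6 : Integrable (fun ω => Y1 ω * X ω / (Z1 ω) ^ 2) μ)
    (hi7 : Integrable (fun ω => Y2 ω * X ω / (Z2 ω) ^ 2) μ)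
    (hi8 : Integrable (fun ω => (Y1 ω * (Z1 ω - ∫ x, Z1 x ∂μ) / Z1 ω) ^ 2) μ)
    (hi9 : Integrable (fun ω => (Y2 ω * (Z2 ω - ∫ x, Z2 x ∂μ) / Z2 ω) ^ 2) μ)
    (hi10 : Integrable Z1 μ) (hi11 : Integrable Z2 μ) :
    (∫ ω, (Y1 ω / (X ω + Z1 ω)) * (Y2 ω / (X ω + Z2 ω)) ∂μ)
        - (∫ ω, Y1 ω / (X ω + Z1 ω) ∂μ) * (∫ ω, Y2 ω / (X ω + Z2 ω) ∂μ)
      ≤ (∫ ω, Y1 ω / Z1 ω ∂μ) * (∫ ω, Y2 ω * X ω / (Z2 ω) ^ 2 ∂μ)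
        + (∫ ω, Y2 ω / Z2 ω ∂μ) * (∫ ω, Y1 ω * X ω / (Z1 ω) ^ 2 ∂μ)
        + (1 / ((∫ ω, Z1 ω ∂μ) * (∫ ω, Z2 ω ∂μ)))
            * Real.sqrt
                ((∫ ω, (Y1 ω * (Z1 ω - ∫ x, Z1 x ∂μ) / Z1 ω) ^ 2 ∂μ)
                  * (∫ ω, (Y2 ω * (Z2 ω - ∫ x, Z2 x ∂μ) / Z2 ω) ^ 2 ∂μ)) := by
  have hR1 := memLp_div_of_nonneg_of_le 2 hY1m.aemeasurable hi10.aemeasurable hY1 hY1Z1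
  have hR2 := memLp_div_of_nonneg_of_le 2 hY2m.aemeasurable hi11.aemeasurable hY2 hY2Z2
  have hcov := covariance_div_le hY1m.aemeasurable hY2m.aemeasurable hi10 hi11
    hY1 hY1Z1 hY2 hY2Z2 hind1 hind2 hi8 hi9
  rw [covariance_eq_sub hR1 hR2] at hcov
  have hprod : ∫ ω, (Y1 ω / (X ω + Z1 ω)) * (Y2 ω / (X ω + Z2 ω)) ∂μ
      ≤ ∫ ω, (Y1 ω / Z1 ω) * (Y2 ω / Z2 ω) ∂μ :=
    integral_mono hi3 (hR1.integrable_mul hR2) fun ω =>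
      mul_le_mul (div_add_le_div (hX ω) (hY1 ω) (hY1Z1 ω))
        (div_add_le_div (hX ω) (hY2 ω) (hY2Z2 ω))
        (div_nonneg (hY2 ω) (add_nonneg (hX ω) ((hY2 ω).trans (hY2Z2 ω))))
        (div_nonneg (hY1 ω) ((hY1 ω).trans (hY1Z1 ω)))
  have hlow : ((∫ ω, Y1 ω / Z1 ω ∂μ) - ∫ ω, Y1 ω * X ω / Z1 ω ^ 2 ∂μ)
        * ((∫ ω, Y2 ω / Z2 ω ∂μ) - ∫ ω, Y2 ω * X ω / Z2 ω ^ 2 ∂μ)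
      ≤ (∫ ω, Y1 ω / (X ω + Z1 ω) ∂μ) * ∫ ω, Y2 ω / (X ω + Z2 ω) ∂μ :=
    mul_le_mul (integral_div_sub_integral_le_integral_div_add hX hY1 hY1Z1 hi1 hi4 hi6)
      (integral_div_sub_integral_le_integral_div_add hX hY2 hY2Z2 hi2 hi5 hi7)
      (sub_nonneg.2 (integral_mul_div_sq_le_integral_div hY2 hZ2X hi5 hi7))
      (integral_nonneg fun ω => div_nonneg (hY1 ω) (add_nonneg (hX ω) ((hY1 ω).trans (hY1Z1 ω))))
  have ha1 : 0 ≤ ∫ ω, Y1 ω * X ω / Z1 ω ^ 2 ∂μ :=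
    integral_nonneg fun ω => div_nonneg (mul_nonneg (hY1 ω) (hX ω)) (sq_nonneg _)
  have ha2 : 0 ≤ ∫ ω, Y2 ω * X ω / Z2 ω ^ 2 ∂μ :=
    integral_nonneg fun ω => div_nonneg (mul_nonneg (hY2 ω) (hX ω)) (sq_nonneg _)
  simp only [Pi.mul_apply] at hcov
  nlinarith [mul_nonneg ha1 ha2]

/-- Covariance inequality (Lemma A.4 of the paper): if `X ≥ 0`,
`Z_1 ≥ Y_1 ≥ 0`, `Z_2 ≥ Y_2 ≥ 0`, `Y_1 ⊥ (Y_2, Z_2)`, `Y_2 ⊥ (Y_1, Z_1)`,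
and `Z_i < X` only when `Z_i = 0`, then (with the convention `0/0 = 0`)
`Cov(Y_1/(X+Z_1), Y_2/(X+Z_2))` is bounded by
`E[Y_1/Z_1]E[Y_2X/Z_2²] + E[Y_2/Z_2]E[Y_1X/Z_1²]
  + (E[Z_1]E[Z_2])⁻¹ √(E[(Y_1(Z_1−E Z_1)/Z_1)²] E[(Y_2(Z_2−E Z_2)/Z_2)²])`. -/
theorem covariance_ratio_inequality
    {Ω : Type*} [MeasurableSpace Ω] (μ : Measure Ω) [IsProbabilityMeasure μ]
    (X Y1 Y2 Z1 Z2 : Ω → ℝ)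
    (hXm : Measurable X) (hY1m : Measurable Y1) (hY2m : Measurable Y2)
    (hZ1m : Measurable Z1) (hZ2m : Measurable Z2)
    (hX : ∀ ω, 0 ≤ X ω)
    (hY1 : ∀ ω, 0 ≤ Y1 ω) (hY1Z1 : ∀ ω, Y1 ω ≤ Z1 ω)
    (hY2 : ∀ ω, 0 ≤ Y2 ω) (hY2Z2 : ∀ ω, Y2 ω ≤ Z2 ω)
    (hZ1X : ∀ ω, Z1 ω < X ω → Z1 ω = 0)
    (hZ2X : ∀ ω, Z2 ω < X ω → Z2 ω = 0)
    (hind1 : IndepFun Y1 (fun ω => (Y2 ω, Z2 ω)) μ)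
    (hind2 : IndepFun Y2 (fun ω => (Y1 ω, Z1 ω)) μ)
    -- all expectations appearing are assumed finite:
    (hi1 : Integrable (fun ω => Y1 ω / (X ω + Z1 ω)) μ)
    (hi2 : Integrable (fun ω => Y2 ω / (X ω + Z2 ω)) μ)
    (hi3 : Integrable (fun ω => (Y1 ω / (X ω + Z1 ω)) * (Y2 ω / (X ω + Z2 ω))) μ)
    (hi4 : Integrable (fun ω => Y1 ω / Z1 ω) μ)
    (hi5 : Integrable (fun ω => Y2 ω / Z2 ω) μ)
    (hi6 : Integrable (fun ω => Y1 ω * X ω / (Z1 ω) ^ 2) μ)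
    (hi7 : Integrable (fun ω => Y2 ω * X ω / (Z2 ω) ^ 2) μ)
    (hi8 : Integrable (fun ω => (Y1 ω * (Z1 ω - ∫ x, Z1 x ∂μ) / Z1 ω) ^ 2) μ)
    (hi9 : Integrable (fun ω => (Y2 ω * (Z2 ω - ∫ x, Z2 x ∂μ) / Z2 ω) ^ 2) μ)
    (hi10 : Integrable Z1 μ) (hi11 : Integrable Z2 μ) :
    (∫ ω, (Y1 ω / (X ω + Z1 ω)) * (Y2 ω / (X ω + Z2 ω)) ∂μ)
        - (∫ ω, Y1 ω / (X ω + Z1 ω) ∂μ) * (∫ ω, Y2 ω / (X ω + Z2 ω) ∂μ)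
      ≤ (∫ ω, Y1 ω / Z1 ω ∂μ) * (∫ ω, Y2 ω * X ω / (Z2 ω) ^ 2 ∂μ)
        + (∫ ω, Y2 ω / Z2 ω ∂μ) * (∫ ω, Y1 ω * X ω / (Z1 ω) ^ 2 ∂μ)
        + (1 / ((∫ ω, Z1 ω ∂μ) * (∫ ω, Z2 ω ∂μ)))
            * Real.sqrt
                ((∫ ω, (Y1 ω * (Z1 ω - ∫ x, Z1 x ∂μ) / Z1 ω) ^ 2 ∂μ)
                  * (∫ ω, (Y2 ω * (Z2 ω - ∫ x, Z2 x ∂μ) / Z2 ω) ^ 2 ∂μ)) :=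
  covariance_ratio_inequality_general μ X Y1 Y2 Z1 Z2 hY1m hY2m hX hY1 hY1Z1 hY2 hY2Z2 hZ2X hind1
    hind2 hi1 hi2 hi3 hi4 hi5 hi6 hi7 hi8 hi9 hi10 hi11
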